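/- Let T be a Tambara functor on a finite group G and 𝔦, 𝔧 ⊆ T ideals. Define 𝔦𝔧(X) = { p_+(ab) : p ∈ G-Set(A,X), a ∈ 𝔦(A), b ∈ 𝔧(A) } for each finite G-set X. Then 𝔦𝔧 is an ideal of T, and 𝔦𝔧 ⊆ 𝔦 ∩ 𝔧. -/

import Mathlib

set_option autoImplicit false

/-! Finite G-sets -/

structure GSet (G : Type) [Group G] : Type 1 where
  carrier : Type
  [mulAction : MulAction G carrier]
  [finite : Finite carrier]

attribute [instance] GSet.mulAction GSet.finite

/-- Equivariant maps of finite `G`-sets. -/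
structure GSetHom {G : Type} [Group G] (X Y : GSet G) : Type where
  toFun : X.carrier → Y.carrier
  map_smul : ∀ (g : G) (x : X.carrier), toFun (g • x) = g • toFun x

namespace GSetHom

variable {G : Type} [Group G]

def id (X : GSet G) : GSetHom X X := ⟨fun x => x, fun _ _ => rfl⟩

def comp {X Y Z : GSet G} (g : GSetHom Y Z) (f : GSetHom X Y) : GSetHom X Z :=
  ⟨fun x => g.toFun (f.toFun x), fun a x => by
    show g.toFun (f.toFun (a • x)) = a • g.toFun (f.toFun x)
    rw [f.map_smul, g.map_smul]⟩

end GSetHom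

namespace GSet

variable {G : Type} [Group G]

/-- Binary disjoint union of `G`-sets. -/
def sum (X Y : GSet G) : GSet G where
  carrier := X.carrier ⊕ Y.carrier

def inl (X Y : GSet G) : GSetHom X (X.sum Y) := ⟨Sum.inl, fun _ _ => rfl⟩

def inr (X Y : GSet G) : GSetHom Y (X.sum Y) := ⟨Sum.inr, fun _ _ => rfl⟩

instance : MulAction G Empty where
  smul _ x := x.elim
  one_smul x := x.elim
  mul_smul _ _ x := x.elim

/-- The empty `G`-set. -/
def empty (G : Type) [Group G] : GSet G where
  carrier := Empty

/-- Finite disjoint unions of `G`-sets. -/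
def sigma {n : ℕ} (Xs : Fin n → GSet G) : GSet G where
  carrier := Σ i, (Xs i).carrier

def sigmaIncl {n : ℕ} (Xs : Fin n → GSet G) (i : Fin n) : GSetHom (Xs i) (sigma Xs) :=
  ⟨fun x => ⟨i, x⟩, fun _ _ => rfl⟩

/-- The canonical pullback of two `G`-maps. -/
def pullback {X Y Z : GSet G} (f : GSetHom X Z) (g : GSetHom Y Z) : GSet G where
  carrier := { q : X.carrier × Y.carrier // f.toFun q.1 = g.toFun q.2 }
  mulAction :=
  { smul := fun a q => ⟨a • q.val, by
      show f.toFun (a • q.val.1) = g.toFun (a • q.val.2)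
      rw [f.map_smul, g.map_smul, q.property]⟩
    one_smul := fun q => Subtype.ext (one_smul G q.val)
    mul_smul := fun a b q => Subtype.ext (mul_smul a b q.val) }

def pbFst {X Y Z : GSet G} (f : GSetHom X Z) (g : GSetHom Y Z) :
    GSetHom (pullback f g) X := ⟨fun q => q.val.1, fun _ _ => rfl⟩

def pbSnd {X Y Z : GSet G} (f : GSetHom X Z) (g : GSetHom Y Z) :
    GSetHom (pullback f g) Y := ⟨fun q => q.val.2, fun _ _ => rfl⟩

/-- The complement of the image of a `G`-map, as a `G`-set. -/
def compl {X Y : GSet G} (f : GSetHom X Y) : GSet G where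
  carrier := { y : Y.carrier // ∀ x, f.toFun x ≠ y }
  mulAction :=
  { smul := fun g y => ⟨g • y.val, fun x h => y.property (g⁻¹ • x) (by
      rw [f.map_smul, h, inv_smul_smul])⟩
    one_smul := fun y => Subtype.ext (one_smul G y.val)
    mul_smul := fun a b y => Subtype.ext (mul_smul a b y.val) }

def complIncl {X Y : GSet G} (f : GSetHom X Y) : GSetHom (compl f) Y :=
  ⟨fun y => y.val, fun _ _ => rfl⟩

/-- Points of Tambara's dependent product `Π_f(A)`: pairs `(y, σ)` of a point `y : Y`
and a section `σ` of `p` on the fiber `f⁻¹(y)` (encoded as an `Option`-valued function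
supported exactly on the fiber). -/
def PiProp {X Y A : GSet G} (f : GSetHom X Y) (p : GSetHom A X)
    (s : Y.carrier × (X.carrier → Option A.carrier)) : Prop :=
  (∀ x, (s.2 x).isSome = true ↔ f.toFun x = s.1) ∧
  (∀ x a, s.2 x = some a → p.toFun a = x)

def PiCar {X Y A : GSet G} (f : GSetHom X Y) (p : GSetHom A X) : Type :=
  { s : Y.carrier × (X.carrier → Option A.carrier) // PiProp f p s }

instance optionFinite {α : Type} [Finite α] : Finite (Option α) :=
  Finite.of_equiv _ (Equiv.optionEquivSumPUnit.{0,0} α).symm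

instance piFinite {X Y A : GSet G} (f : GSetHom X Y) (p : GSetHom A X) :
    Finite (PiCar f p) := by
  unfold PiCar; infer_instance

def piSmul {X Y A : GSet G} (f : GSetHom X Y) (p : GSetHom A X) (g : G)
    (s : PiCar f p) : PiCar f p :=
  ⟨(g • s.val.1, fun x => (s.val.2 (g⁻¹ • x)).map (g • ·)), by
    constructor
    · intro x
      rw [Option.isSome_map, s.property.1 (g⁻¹ • x), f.map_smul]
      constructor
      · intro h; rw [← h, smul_inv_smul]
      · intro h; rw [h, inv_smul_smul]
    · intro x a ha
      rcases Option.map_eq_some_iff.mp ha with ⟨b, hb, rfl⟩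
      rw [p.map_smul, s.property.2 _ _ hb, smul_inv_smul]⟩

instance piAction {X Y A : GSet G} (f : GSetHom X Y) (p : GSetHom A X) :
    MulAction G (PiCar f p) where
  smul := piSmul f p
  one_smul s := by
    apply Subtype.ext
    refine Prod.ext (one_smul G s.val.1) ?_
    funext x
    show (s.val.2 ((1:G)⁻¹ • x)).map ((1:G) • ·) = s.val.2 x
    rw [inv_one, one_smul]
    cases h : s.val.2 x <;> simp [one_smul]
  mul_smul a b s := by
    apply Subtype.ext
    refine Prod.ext (mul_smul a b s.val.1) ?_
    funext x
    show (s.val.2 ((a * b)⁻¹ • x)).map ((a * b) • ·)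
        = ((s.val.2 (b⁻¹ • (a⁻¹ • x))).map (b • ·)).map (a • ·)
    rw [Option.map_map, mul_inv_rev, mul_smul]
    cases h : s.val.2 (b⁻¹ • a⁻¹ • x) <;> simp [mul_smul, Function.comp]

/-- Tambara's dependent product `Π_f(A)` as a `G`-set. -/
def piObj {X Y A : GSet G} (f : GSetHom X Y) (p : GSetHom A X) : GSet G where
  carrier := PiCar f p

/-- The projection `π : Π_f(A) → Y`. -/
def piPr {X Y A : GSet G} (f : GSetHom X Y) (p : GSetHom A X) :
    GSetHom (piObj f p) Y := ⟨fun s => s.val.1, fun _ _ => rfl⟩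

theorem optGet {α : Type} {o : Option α} {a : α} (h : o = some a) :
    ∀ hs : o.isSome = true, o.get hs = a := by subst h; intro _; rfl

/-- The evaluation map `λ : X ×_Y Π_f(A) → A`, `(x, (y, σ)) ↦ σ(x)`. -/
def piEval {X Y A : GSet G} (f : GSetHom X Y) (p : GSetHom A X) :
    GSetHom (pullback f (piPr f p)) A where
  toFun z := (z.val.2.val.2 z.val.1).get (by
    rw [z.val.2.property.1 z.val.1]; exact z.property)
  map_smul g z := by
    have hs : (z.val.2.val.2 z.val.1).isSome = true := by
      rw [z.val.2.property.1 z.val.1]; exact z.property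
    obtain ⟨a, ha⟩ := Option.isSome_iff_exists.mp hs
    have h1 : z.val.2.val.2 z.val.1 = some a := ha
    have h2 : (g • z).val.2.val.2 (g • z).val.1 = some (g • a) := by
      show (z.val.2.val.2 (g⁻¹ • (g • z.val.1))).map (g • ·) = some (g • a)
      rw [inv_smul_smul, h1]; rfl
    simp only [optGet h2, optGet h1]

end GSet

namespace GSet

/-- A transitive (nonempty) finite `G`-set. -/
def IsTransitive {G : Type} [Group G] (X : GSet G) : Prop :=
  Nonempty X.carrier ∧ MulAction.IsPretransitive G X.carrier

end GSet

/-! Tambara functors -/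

/-- The underlying system of commutative rings of a Tambara functor. -/
structure TamData (G : Type) [Group G] : Type 1 where
  obj : GSet G → Type
  ring : ∀ X, CommRing (obj X)

attribute [instance] TamData.ring

/-- A Tambara functor on the finite group `G`: a system of commutative rings `obj X`
indexed by finite `G`-sets, together with restrictions `res`, additive transfers `tr`
and multiplicative transfers `nm`, functorial, additive, satisfying the Mackey
base-change conditions, the projection formula, and Tambara's distributive law. -/
structure TambaraFunctor (G : Type) [Group G] extends TamData G where
  res : ∀ {X Y : GSet G}, GSetHom X Y → (obj Y →+* obj X)
  tr : ∀ {X Y : GSet G}, GSetHom X Y → (obj X →+ obj Y)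
  nm : ∀ {X Y : GSet G}, GSetHom X Y → (obj X →* obj Y)
  res_id : ∀ {X : GSet G} (x : obj X), res (GSetHom.id X) x = x
  res_comp : ∀ {X Y Z : GSet G} (f : GSetHom X Y) (g : GSetHom Y Z) (z : obj Z),
    res f (res g z) = res (g.comp f) z
  tr_id : ∀ {X : GSet G} (x : obj X), tr (GSetHom.id X) x = x
  tr_comp : ∀ {X Y Z : GSet G} (f : GSetHom X Y) (g : GSetHom Y Z) (x : obj X),
    tr g (tr f x) = tr (g.comp f) x
  nm_id : ∀ {X : GSet G} (x : obj X), nm (GSetHom.id X) x = x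
  nm_comp : ∀ {X Y Z : GSet G} (f : GSetHom X Y) (g : GSetHom Y Z) (x : obj X),
    nm g (nm f x) = nm (g.comp f) x
  /-- additivity on binary disjoint unions -/
  add_bij : ∀ X Y : GSet G, Function.Bijective
    (fun t : obj (X.sum Y) => (res (GSet.inl X Y) t, res (GSet.inr X Y) t))
  /-- `T(∅)` is the zero ring -/
  empty_subsingleton : ∀ x y : obj (GSet.empty G), x = y
  /-- Mackey base change for the additive transfer -/
  tr_bc : ∀ {X Y Z : GSet G} (f : GSetHom X Z) (g : GSetHom Y Z) (x : obj X),
    res g (tr f x) = tr (GSet.pbSnd f g) (res (GSet.pbFst f g) x)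
  /-- Mackey base change for the multiplicative transfer -/
  nm_bc : ∀ {X Y Z : GSet G} (f : GSetHom X Z) (g : GSetHom Y Z) (x : obj X),
    res g (nm f x) = nm (GSet.pbSnd f g) (res (GSet.pbFst f g) x)
  /-- the projection formula -/
  proj_formula : ∀ {X Y : GSet G} (f : GSetHom X Y) (a : obj X) (b : obj Y),
    tr f (a * res f b) = tr f a * b
  /-- the norm of zero is the additive transfer of `1` from the complement of the image -/
  nm_zero : ∀ {X Y : GSet G} (f : GSetHom X Y), nm f (0 : obj X) = tr (GSet.complIncl f) 1
  /-- Tambara's distributive law, via the canonical exponential diagram on `Π_f(A)` -/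
  distrib : ∀ {X Y A : GSet G} (f : GSetHom X Y) (p : GSetHom A X) (a : obj A),
    nm f (tr p a) = tr (GSet.piPr f p)
      (nm (GSet.pbSnd f (GSet.piPr f p)) (res (GSet.piEval f p) a))

namespace TambaraFunctor

variable {G : Type} [Group G]

/-- `f_!(x) = f_•(x) - f_•(0)`. -/
def shriek (T : TambaraFunctor G) {X Y : GSet G} (f : GSetHom X Y) (x : T.obj X) :
    T.obj Y := T.nm f x - T.nm f 0

end TambaraFunctor

/-- A morphism of Tambara functors: a family of ring homomorphisms natural with respect
to restrictions, additive transfers and multiplicative transfers. -/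
structure TamHom {G : Type} [Group G] (T S : TambaraFunctor G) where
  app : ∀ X : GSet G, T.obj X →+* S.obj X
  app_res : ∀ {X Y : GSet G} (f : GSetHom X Y) (y : T.obj Y),
    app X (T.res f y) = S.res f (app Y y)
  app_tr : ∀ {X Y : GSet G} (f : GSetHom X Y) (x : T.obj X),
    app Y (T.tr f x) = S.tr f (app X x)
  app_nm : ∀ {X Y : GSet G} (f : GSetHom X Y) (x : T.obj X),
    app Y (T.nm f x) = S.nm f (app X x)

namespace TambaraFunctor

variable {G : Type} [Group G]

/-- An ideal of a Tambara functor: a family of ideals closed under restrictions,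
additive transfers, and satisfying `f_•(𝔦(X)) ⊆ f_•(0) + 𝔦(Y)`
(equivalently, closed under `f_!`). -/
structure IsIdeal (T : TambaraFunctor G) (I : ∀ X : GSet G, Ideal (T.obj X)) : Prop where
  res_mem : ∀ {X Y : GSet G} (f : GSetHom X Y) {y : T.obj Y}, y ∈ I Y → T.res f y ∈ I X
  tr_mem : ∀ {X Y : GSet G} (f : GSetHom X Y) {x : T.obj X}, x ∈ I X → T.tr f x ∈ I Y
  shriek_mem : ∀ {X Y : GSet G} (f : GSetHom X Y) {x : T.obj X},
    x ∈ I X → T.shriek f x ∈ I Y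

/-- The ideal generated by a family of subsets: the intersection of all ideals
containing it. -/
def gen (T : TambaraFunctor G) (S : ∀ X : GSet G, Set (T.obj X)) (X : GSet G) :
    Ideal (T.obj X) :=
  ⨅ (I : ∀ Y : GSet G, Ideal (T.obj Y)) (_ : T.IsIdeal I) (_ : ∀ Y, S Y ⊆ ↑(I Y)), I X

/-- The family of subsets consisting of the single element `a ∈ T(A)`. -/
def single (T : TambaraFunctor G) (A : GSet G) (a : T.obj A) (X : GSet G) :
    Set (T.obj X) := { x | ∃ h : A = X, h ▸ a = x }

/-- The principal ideal `⟨a⟩` generated by `a ∈ T(A)`. -/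
def principal (T : TambaraFunctor G) (A : GSet G) (a : T.obj A) :
    ∀ X : GSet G, Ideal (T.obj X) := T.gen (T.single A a)

/-- The defining set of the product of two ideals. -/
def mulSet (T : TambaraFunctor G) (I J : ∀ X : GSet G, Ideal (T.obj X)) (X : GSet G) :
    Set (T.obj X) :=
  { x | ∃ (A : GSet G) (p : GSetHom A X) (a b : T.obj A),
      a ∈ I A ∧ b ∈ J A ∧ x = T.tr p (a * b) }

/-- The product of two ideals of a Tambara functor. -/
def mulIdl (T : TambaraFunctor G) (I J : ∀ X : GSet G, Ideal (T.obj X)) (X : GSet G) :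
    Ideal (T.obj X) := Ideal.span (T.mulSet I J X)

/-- Iterated products of ideals. -/
def mulMulti (T : TambaraFunctor G) :
    List (∀ X : GSet G, Ideal (T.obj X)) → ∀ X : GSet G, Ideal (T.obj X)
  | [] => fun _ => ⊤
  | I :: ls => T.mulIdl I (T.mulMulti ls)

/-- A prime ideal of a Tambara functor. -/
structure IsPrime (T : TambaraFunctor G) (P : ∀ X : GSet G, Ideal (T.obj X)) : Prop where
  isIdeal : T.IsIdeal P
  ne_top : ∃ X : GSet G, P X ≠ ⊤
  mem_or_mem : ∀ {X Y : GSet G}, X.IsTransitive → Y.IsTransitive →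
    ∀ {a : T.obj X} {b : T.obj Y},
      (∀ Z : GSet G, T.mulIdl (T.principal X a) (T.principal Y b) Z ≤ P Z) →
      a ∈ P X ∨ b ∈ P Y

/-- A maximal ideal of a Tambara functor. -/
structure IsMaximal (T : TambaraFunctor G) (M : ∀ X : GSet G, Ideal (T.obj X)) : Prop where
  isIdeal : T.IsIdeal M
  ne_top : ∃ X : GSet G, M X ≠ ⊤
  eq_of_le : ∀ K : ∀ X : GSet G, Ideal (T.obj X), T.IsIdeal K →
    (∀ X, M X ≤ K X) → (K = M ∨ ∀ X, K X = ⊤)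

end TambaraFunctor

namespace GSet

/-- The `G`-set `G/e`, i.e. `G` with the left regular action. -/
def regular (G : Type) [Group G] [Finite G] : GSet G where
  carrier := G

/-- Right multiplication `G/e → G/e`, an equivariant map. -/
def rightMul {G : Type} [Group G] [Finite G] (g : G) :
    GSetHom (regular G) (regular G) :=
  ⟨fun x => (id x : G) * g, fun a x => mul_assoc a x g⟩

end GSet

/-! The elements `p_+(ab)` already form an ideal of each ring `T(X)`: a multiple
`r · p_+(ab)` is `p_+(a · b · p^*r)` by the projection formula, and a sum
`p_+(ab) + q_+(cd)` is a single such transfer from `A ⊔ B`, because the transfers along the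
two summand inclusions are mutually orthogonal and are split by restriction up to a unit.
Closure under restriction is Mackey base change, and closure under `f_!` is Tambara's
distributive law together with the multiplicativity of `f_!`, which holds because `f_•(0)`
is an idempotent absorbing every `f_•(u)`. -/

section

variable {G : Type} [Group G]

theorem GSetHom.ext {X Y : GSet G} {f g : GSetHom X Y} (h : f.toFun = g.toFun) : f = g := by
  cases f; cases g; cases h; rfl

def GSetHom.sumElim {A B X : GSet G} (p : GSetHom A X) (q : GSetHom B X) :
    GSetHom (A.sum B) X :=
  ⟨Sum.elim p.toFun q.toFun, by
    rintro g (z | z)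
    · exact p.map_smul g z
    · exact q.map_smul g z⟩

theorem GSetHom.sumElim_comp_inl {A B X : GSet G} (p : GSetHom A X) (q : GSetHom B X) :
    (p.sumElim q).comp (GSet.inl A B) = p :=
  GSetHom.ext rfl

theorem GSetHom.sumElim_comp_inr {A B X : GSet G} (p : GSetHom A X) (q : GSetHom B X) :
    (p.sumElim q).comp (GSet.inr A B) = q :=
  GSetHom.ext rfl

instance GSet.isEmpty_pullback_inl_inr (A B : GSet G) :
    IsEmpty (GSet.pullback (GSet.inl A B) (GSet.inr A B)).carrier :=
  ⟨fun z => Sum.inl_ne_inr z.property⟩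

instance GSet.isEmpty_pullback_inr_inl (A B : GSet G) :
    IsEmpty (GSet.pullback (GSet.inr A B) (GSet.inl A B)).carrier :=
  ⟨fun z => Sum.inr_ne_inl z.property⟩

instance GSet.isEmpty_pullback_complIncl {X Y : GSet G} (f : GSetHom X Y) :
    IsEmpty (GSet.pullback f (GSet.complIncl f)).carrier :=
  ⟨fun z => z.val.2.property z.val.1 z.property⟩

namespace TambaraFunctor

variable (T : TambaraFunctor G)

theorem subsingleton_obj {Z : GSet G} [IsEmpty Z.carrier] : Subsingleton (T.obj Z) := by
  let toEmpty : GSetHom Z (GSet.empty G) := ⟨isEmptyElim, fun _ z => isEmptyElim z⟩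
  let ofEmpty : GSetHom (GSet.empty G) Z := ⟨Empty.elim, fun _ e => e.elim⟩
  have hid : ofEmpty.comp toEmpty = GSetHom.id Z := GSetHom.ext (funext isEmptyElim)
  -- `T(Z)` is a retract of the zero ring `T(∅)`.
  refine ⟨fun z z' => ?_⟩
  rw [← T.res_id z, ← T.res_id z', ← hid, ← T.res_comp, ← T.res_comp,
    T.empty_subsingleton (T.res ofEmpty z)]

theorem res_tr_eq_zero {X Y Z : GSet G} (f : GSetHom X Z) (g : GSetHom Y Z)
    [IsEmpty (GSet.pullback f g).carrier] (x : T.obj X) : T.res g (T.tr f x) = 0 := by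
  have := T.subsingleton_obj (Z := GSet.pullback f g)
  rw [T.tr_bc, Subsingleton.elim (T.res (GSet.pbFst f g) x) 0, map_zero]

theorem exists_unit_res_tr_eq_mul {A Y : GSet G} (f : GSetHom A Y)
    (hf : Function.Injective f.toFun) :
    ∃ e : (T.obj A)ˣ, ∀ x, T.res f (T.tr f x) = e * x := by
  -- For injective `f` both projections of `A ×_Y A` equal `t`, an isomorphism with inverse
  -- the diagonal `δ`, and `e = t_+(1)` has inverse `δ^*(δ_+(1))`.
  let t := GSet.pbFst f f
  have hsnd : GSet.pbSnd f f = t := GSetHom.ext (funext fun q => (hf q.property).symm)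
  let δ : GSetHom A (GSet.pullback f f) := ⟨fun x => ⟨(x, x), rfl⟩, fun _ _ => rfl⟩
  have htδ : t.comp δ = GSetHom.id A := GSetHom.ext rfl
  have hδt : δ.comp t = GSetHom.id (GSet.pullback f f) :=
    GSetHom.ext (funext fun q => Subtype.ext (Prod.ext rfl (hf q.property)))
  have hres_tr : ∀ x, T.res f (T.tr f x) = T.tr t 1 * x := fun x => by
    rw [T.tr_bc, hsnd, ← T.proj_formula, one_mul]
  have hinv : T.tr t 1 * T.res δ (T.tr δ 1) = 1 := by
    rw [← T.proj_formula, one_mul, T.res_comp, hδt, T.res_id, T.tr_comp, htδ, T.tr_id]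
  exact ⟨⟨_, _, hinv, by rw [mul_comm, hinv]⟩, hres_tr⟩

theorem exists_tr_inl_mul_add_tr_inr_mul {A B : GSet G} (a b : T.obj A) (c d : T.obj B) :
    ∃ (u : (T.obj A)ˣ) (v : (T.obj B)ˣ),
      T.tr (GSet.inl A B) (a * b) + T.tr (GSet.inr A B) (c * d) =
        (T.tr (GSet.inl A B) (u * a) + T.tr (GSet.inr A B) (v * c)) *
          (T.tr (GSet.inl A B) b + T.tr (GSet.inr A B) d) := by
  obtain ⟨e, he⟩ := T.exists_unit_res_tr_eq_mul (GSet.inl A B) Sum.inl_injective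
  obtain ⟨e', he'⟩ := T.exists_unit_res_tr_eq_mul (GSet.inr A B) Sum.inr_injective
  have hl : T.res (GSet.inl A B) (T.tr (GSet.inl A B) b + T.tr (GSet.inr A B) d) = e * b := by
    rw [map_add, he, T.res_tr_eq_zero, add_zero]
  have hr : T.res (GSet.inr A B) (T.tr (GSet.inl A B) b + T.tr (GSet.inr A B) d) = e' * d := by
    rw [map_add, he', T.res_tr_eq_zero, zero_add]
  refine ⟨e⁻¹, e'⁻¹, ?_⟩
  rw [add_mul, ← T.proj_formula, ← T.proj_formula, hl, hr, mul_mul_mul_comm, Units.inv_mul,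
    one_mul, mul_mul_mul_comm, Units.inv_mul, one_mul]

theorem nm_zero_mul_nm {X Y : GSet G} (f : GSetHom X Y) (u : T.obj X) :
    T.nm f 0 * T.nm f u = T.nm f 0 := by
  have := T.subsingleton_obj (Z := GSet.pullback f (GSet.complIncl f))
  have hres : T.res (GSet.complIncl f) (T.nm f u) = 1 := by
    rw [T.nm_bc, Subsingleton.elim (T.res (GSet.pbFst f (GSet.complIncl f)) u) 1, map_one]
  rw [T.nm_zero, ← T.proj_formula, hres, one_mul]

theorem shriek_mul {X Y : GSet G} (f : GSetHom X Y) (x y : T.obj X) :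
    T.shriek f (x * y) = T.shriek f x * T.shriek f y := by
  unfold shriek
  rw [map_mul]
  linear_combination T.nm_zero_mul_nm f x + T.nm_zero_mul_nm f y - T.nm_zero_mul_nm f 0

theorem shriek_tr {X Y A : GSet G} (f : GSetHom X Y) (p : GSetHom A X) (a : T.obj A) :
    T.shriek f (T.tr p a) =
      T.tr (GSet.piPr f p) (T.shriek (GSet.pbSnd f (GSet.piPr f p))
        (T.res (GSet.piEval f p) a)) := by
  have h0 := T.distrib f p 0
  rw [map_zero (T.tr p), map_zero (T.res (GSet.piEval f p))] at h0
  rw [shriek, shriek, T.distrib, h0, map_sub]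

variable {T} {I J : ∀ X : GSet G, Ideal (T.obj X)}

theorem zero_mem_mulSet (X : GSet G) : (0 : T.obj X) ∈ T.mulSet I J X :=
  ⟨X, GSetHom.id X, 0, 0, zero_mem _, zero_mem _, by rw [mul_zero, map_zero]⟩

theorem mul_mem_mulSet {X : GSet G} (r : T.obj X) {x : T.obj X} (hx : x ∈ T.mulSet I J X) :
    r * x ∈ T.mulSet I J X := by
  obtain ⟨A, p, a, b, ha, hb, rfl⟩ := hx
  refine ⟨A, p, a * T.res p r, b, Ideal.mul_mem_right _ _ ha, hb, ?_⟩
  rw [mul_right_comm, T.proj_formula, mul_comm]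

theorem add_mem_mulSet (hI : T.IsIdeal I) (hJ : T.IsIdeal J) {X : GSet G} {x y : T.obj X}
    (hx : x ∈ T.mulSet I J X) (hy : y ∈ T.mulSet I J X) : x + y ∈ T.mulSet I J X := by
  obtain ⟨A, p, a, b, ha, hb, rfl⟩ := hx
  obtain ⟨B, q, c, d, hc, hd, rfl⟩ := hy
  obtain ⟨u, v, h⟩ := T.exists_tr_inl_mul_add_tr_inr_mul a b c d
  refine ⟨A.sum B, p.sumElim q, T.tr (GSet.inl A B) (u * a) + T.tr (GSet.inr A B) (v * c),
    T.tr (GSet.inl A B) b + T.tr (GSet.inr A B) d,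
    add_mem (hI.tr_mem _ (Ideal.mul_mem_left _ _ ha)) (hI.tr_mem _ (Ideal.mul_mem_left _ _ hc)),
    add_mem (hJ.tr_mem _ hb) (hJ.tr_mem _ hd), ?_⟩
  rw [← h, map_add, T.tr_comp, T.tr_comp, GSetHom.sumElim_comp_inl, GSetHom.sumElim_comp_inr]

def mulSetIdeal (hI : T.IsIdeal I) (hJ : T.IsIdeal J) (X : GSet G) : Ideal (T.obj X) where
  carrier := T.mulSet I J X
  zero_mem' := zero_mem_mulSet X
  add_mem' := add_mem_mulSet hI hJ
  smul_mem' := mul_mem_mulSet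

theorem coe_mulIdl (hI : T.IsIdeal I) (hJ : T.IsIdeal J) (X : GSet G) :
    (T.mulIdl I J X : Set (T.obj X)) = T.mulSet I J X :=
  congrArg SetLike.coe (Ideal.span_eq (mulSetIdeal hI hJ X))

theorem res_mem_mulSet (hI : T.IsIdeal I) (hJ : T.IsIdeal J) {X Y : GSet G} (f : GSetHom X Y)
    {y : T.obj Y} (hy : y ∈ T.mulSet I J Y) : T.res f y ∈ T.mulSet I J X := by
  obtain ⟨A, p, a, b, ha, hb, rfl⟩ := hy
  refine ⟨GSet.pullback p f, GSet.pbSnd p f, T.res (GSet.pbFst p f) a,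
    T.res (GSet.pbFst p f) b, hI.res_mem _ ha, hJ.res_mem _ hb, ?_⟩
  rw [T.tr_bc, map_mul]

theorem tr_mem_mulSet {X Y : GSet G} (f : GSetHom X Y) {x : T.obj X}
    (hx : x ∈ T.mulSet I J X) : T.tr f x ∈ T.mulSet I J Y := by
  obtain ⟨A, p, a, b, ha, hb, rfl⟩ := hx
  exact ⟨A, f.comp p, a, b, ha, hb, T.tr_comp p f _⟩

theorem shriek_mem_mulSet (hI : T.IsIdeal I) (hJ : T.IsIdeal J) {X Y : GSet G}
    (f : GSetHom X Y) {x : T.obj X} (hx : x ∈ T.mulSet I J X) :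
    T.shriek f x ∈ T.mulSet I J Y := by
  obtain ⟨A, p, a, b, ha, hb, rfl⟩ := hx
  let q := GSet.pbSnd f (GSet.piPr f p)
  let ev := GSet.piEval f p
  refine ⟨GSet.piObj f p, GSet.piPr f p, T.shriek q (T.res ev a), T.shriek q (T.res ev b),
    hI.shriek_mem _ (hI.res_mem _ ha), hJ.shriek_mem _ (hJ.res_mem _ hb), ?_⟩
  rw [T.shriek_tr, map_mul, T.shriek_mul]

theorem mulSet_subset_inf (hI : T.IsIdeal I) (hJ : T.IsIdeal J) (X : GSet G) :
    T.mulSet I J X ⊆ (I X ⊓ J X : Ideal (T.obj X)) := by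
  rintro x ⟨A, p, a, b, ha, hb, rfl⟩
  exact ⟨hI.tr_mem p (Ideal.mul_mem_right _ _ ha), hJ.tr_mem p (Ideal.mul_mem_left _ _ hb)⟩

theorem isIdeal_mulIdl (hI : T.IsIdeal I) (hJ : T.IsIdeal J) : T.IsIdeal (T.mulIdl I J) := by
  have hmem : ∀ {X} {x : T.obj X}, x ∈ T.mulIdl I J X ↔ x ∈ T.mulSet I J X := by
    intro X x
    rw [← SetLike.mem_coe, coe_mulIdl hI hJ]
  exact ⟨fun f _ hy => hmem.2 (res_mem_mulSet hI hJ f (hmem.1 hy)),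
    fun f _ hx => hmem.2 (tr_mem_mulSet f (hmem.1 hx)),
    fun f _ hx => hmem.2 (shriek_mem_mulSet hI hJ f (hmem.1 hx))⟩

theorem mulIdl_le_inf (hI : T.IsIdeal I) (hJ : T.IsIdeal J) (X : GSet G) :
    T.mulIdl I J X ≤ I X ⊓ J X := by
  rw [← SetLike.coe_subset_coe, coe_mulIdl hI hJ]
  exact mulSet_subset_inf hI hJ X

end TambaraFunctor

end

theorem mulIdl_isIdeal_and_le_inf_general (G : Type) [Group G] (T : TambaraFunctor G)
    (I J : ∀ X : GSet G, Ideal (T.obj X)) (hI : T.IsIdeal I) (hJ : T.IsIdeal J) :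
    T.IsIdeal (T.mulIdl I J) ∧
    (∀ X : GSet G, (T.mulIdl I J X : Set (T.obj X)) = T.mulSet I J X) ∧
    (∀ X : GSet G, T.mulIdl I J X ≤ I X ⊓ J X) :=
  ⟨T.isIdeal_mulIdl hI hJ, T.coe_mulIdl hI hJ, T.mulIdl_le_inf hI hJ⟩

/-- the product of two ideals is an ideal (whose levels are exactly the
sets `{ p_+(ab) }`), and it is contained in their intersection. -/
theorem mulIdl_isIdeal_and_le_inf (G : Type) [Group G] [Finite G] (T : TambaraFunctor G)
    (I J : ∀ X : GSet G, Ideal (T.obj X)) (hI : T.IsIdeal I) (hJ : T.IsIdeal J) :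
    T.IsIdeal (T.mulIdl I J) ∧
    (∀ X : GSet G, (T.mulIdl I J X : Set (T.obj X)) = T.mulSet I J X) ∧
    (∀ X : GSet G, T.mulIdl I J X ≤ I X ⊓ J X) :=
  mulIdl_isIdeal_and_le_inf_general G T I J hI hJ
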